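/- Let G be a connected locally finite graph and let v_0 and u_0 be two distinct vertices of G. Then, with both sums taken in [0,infinity], the sum over all closed walks omega from v_0 to v_0 that visit u_0 of p_G(omega) is at most (sigma_{v_0}/sigma_{u_0}) times the sum over all walks omega from v_0 to u_0 of p_G(omega). -/

import Mathlib

open scoped ENNReal

variable {V : Type*}

/-- Weight of a walk: product over all vertices except the last of the inverse degree. -/
noncomputable def wgt (G : SimpleGraph V) [G.LocallyFinite] {v u : V} (p : G.Walk v u) : ℝ≥0∞ :=
  (p.support.dropLast.map fun x => ((G.degree x : ℝ≥0∞))⁻¹).prod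

/-
Cut a closed walk from `v₀` through `u₀` at its first visit to `u₀`: it becomes a first-passage
walk `v₀ → u₀` (one with `p.support.count u₀ = 1`) followed by an arbitrary walk `u₀ → v₀`, and the
weight is multiplicative. First-passage walks have total weight at most `1`: for `x ≠ u₀`, the
total over those of length `≤ n + 1` from `x` is at most the average, over the neighbours `y` of
`x`, of the totals over those of length `≤ n` from `y`, so induction on `n` applies. Finally,
reversing a walk `ω : u₀ → v₀` gives `σ_{u₀} · p(ω) = σ_{v₀} · p(ω.reverse)`.
-/

open SimpleGraph

lemma ENNReal.tsum_le_of_forall_tsum_sublevel_le {α : Type*} {f : α → ℝ≥0∞} (ℓ : α → ℕ)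
    {c : ℝ≥0∞} (h : ∀ n, ∑' a : {a // ℓ a ≤ n}, f a ≤ c) : ∑' a, f a ≤ c := by
  classical
  rw [ENNReal.tsum_eq_iSup_sum]
  refine iSup_le fun s => ?_
  have hs : ∀ a ∈ s, ℓ a ≤ s.sup ℓ := fun a ha => Finset.le_sup ha
  calc ∑ a ∈ s, f a = ∑ a ∈ s.subtype (fun a => ℓ a ≤ s.sup ℓ), f a :=
        (Finset.sum_subtype_of_mem f hs).symm
    _ ≤ c := (ENNReal.sum_le_tsum _).trans (h _)

lemma SimpleGraph.Walk.eq_nil_of_count_support_eq_one {G : SimpleGraph V} [DecidableEq V] {u : V}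
    {p : G.Walk u u} (h : p.support.count u = 1) : p = .nil := by
  cases p with
  | nil => rfl
  | cons _ q =>
    rw [Walk.support_cons, List.count_cons_self, add_eq_right, List.count_eq_zero] at h
    exact absurd q.end_mem_support h

section Weight

variable {G : SimpleGraph V} [G.LocallyFinite]

@[simp] lemma wgt_nil {v : V} : wgt G (Walk.nil : G.Walk v v) = 1 := rfl

@[simp] lemma wgt_cons {u v w : V} (h : G.Adj u v) (p : G.Walk v w) :
    wgt G (p.cons h) = (G.degree u : ℝ≥0∞)⁻¹ * wgt G p := by
  rw [wgt, wgt, Walk.support_cons, ← p.cons_tail_support, List.dropLast_cons_cons, List.map_cons,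
    List.prod_cons]

lemma wgt_append {u v w : V} (p : G.Walk u v) (q : G.Walk v w) :
    wgt G (p.append q) = wgt G p * wgt G q := by
  induction p with
  | nil => simp
  | cons h p ih => rw [Walk.cons_append, wgt_cons, ih, wgt_cons, mul_assoc]

lemma wgt_mul_inv_degree {u v : V} (p : G.Walk u v) :
    wgt G p * (G.degree v : ℝ≥0∞)⁻¹ = (p.support.map fun x => (G.degree x : ℝ≥0∞)⁻¹).prod := by
  induction p with
  | nil => simp [wgt]
  | cons h p ih => rw [wgt_cons, Walk.support_cons, List.map_cons, List.prod_cons, ← ih, mul_assoc]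

lemma wgt_reverse_mul_inv_degree {u v : V} (p : G.Walk u v) :
    wgt G p.reverse * (G.degree u : ℝ≥0∞)⁻¹ = wgt G p * (G.degree v : ℝ≥0∞)⁻¹ := by
  rw [wgt_mul_inv_degree, wgt_mul_inv_degree, Walk.support_reverse, List.map_reverse,
    List.prod_reverse]

lemma wgt_eq_degree_div_mul_wgt_reverse {u v : V} (huv : u ≠ v) (p : G.Walk u v) :
    wgt G p = G.degree v / G.degree u * wgt G p.reverse := by
  have hv : (G.degree v : ℝ≥0∞) ≠ 0 := by
    have hadj := p.adj_penultimate (Walk.not_nil_of_ne huv)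
    exact_mod_cast ((G.degree_pos_iff_exists_adj v).2 ⟨_, hadj.symm⟩).ne'
  calc wgt G p = wgt G p * (G.degree v : ℝ≥0∞)⁻¹ * G.degree v := by
        rw [mul_assoc, ENNReal.inv_mul_cancel hv (ENNReal.natCast_ne_top _), mul_one]
    _ = wgt G p.reverse * (G.degree u : ℝ≥0∞)⁻¹ * G.degree v := by
        rw [wgt_reverse_mul_inv_degree]
    _ = G.degree v / G.degree u * wgt G p.reverse := by
        rw [div_eq_mul_inv]; ring

lemma tsum_wgt_eq_degree_div_mul_tsum_wgt {u v : V} (huv : u ≠ v) :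
    ∑' p : G.Walk u v, wgt G p = G.degree v / G.degree u * ∑' p : G.Walk v u, wgt G p := by
  let reverseEquiv : G.Walk u v ≃ G.Walk v u := .ofBijective _ Walk.reverse_bijective
  rw [← reverseEquiv.tsum_eq, ← ENNReal.tsum_mul_left]
  exact tsum_congr (wgt_eq_degree_div_mul_wgt_reverse huv)

end Weight

section FirstPassage

variable {G : SimpleGraph V} [G.LocallyFinite] [DecidableEq V]

lemma tsum_wgt_firstPassage_self_le_one (u : V) (n : ℕ) :
    ∑' p : {p : G.Walk u u // p.support.count u = 1 ∧ p.length ≤ n}, wgt G p.1 ≤ 1 := by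
  have hnil (p : {p : G.Walk u u // p.support.count u = 1 ∧ p.length ≤ n}) : p.1 = .nil :=
    Walk.eq_nil_of_count_support_eq_one p.2.1
  calc ∑' p : {p : G.Walk u u // p.support.count u = 1 ∧ p.length ≤ n}, wgt G p.1
      = ∑' p : {p : G.Walk u u // p.support.count u = 1 ∧ p.length ≤ n},
          (fun _ : Unit => (1 : ℝ≥0∞)) () := tsum_congr fun p => by rw [hnil p, wgt_nil]
    _ ≤ ∑' _ : Unit, 1 :=
        ENNReal.tsum_comp_le_tsum_of_injective (f := fun _ => ())
          (fun p q _ => Subtype.ext (by rw [hnil, hnil])) _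
    _ = 1 := by simp

lemma tsum_wgt_firstPassage_succ_le {x u : V} (hx : x ≠ u) (n : ℕ) :
    ∑' p : {p : G.Walk x u // p.support.count u = 1 ∧ p.length ≤ n + 1}, wgt G p.1 ≤
      (G.degree x : ℝ≥0∞)⁻¹ * ∑' y : G.neighborSet x,
        ∑' q : {q : G.Walk y u // q.support.count u = 1 ∧ q.length ≤ n}, wgt G q.1 := by
  set T := {p : G.Walk x u // p.support.count u = 1 ∧ p.length ≤ n + 1}
  have hnil (p : T) : ¬ p.1.Nil := Walk.not_nil_of_ne hx
  have htail (p : T) : p.1.tail.support.count u = 1 ∧ p.1.tail.length ≤ n := by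
    have hcount := p.2.1
    rw [← Walk.cons_support_tail (hnil p), List.count_cons_of_ne hx] at hcount
    have hlen := Walk.length_tail_add_one (hnil p)
    exact ⟨hcount, by omega⟩
  let firstStep (p : T) : Σ y : G.neighborSet x,
      {q : G.Walk y u // q.support.count u = 1 ∧ q.length ≤ n} :=
    ⟨⟨p.1.snd, p.1.adj_snd (hnil p)⟩, ⟨p.1.tail, htail p⟩⟩
  have hcons (p : T) : (firstStep p).2.1.cons (firstStep p).1.2 = p.1 :=
    p.1.cons_tail_eq (hnil p)
  have hinj : Function.Injective firstStep := fun p q hpq =>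
    Subtype.ext <| by rw [← hcons p, ← hcons q, hpq]
  calc ∑' p : T, wgt G p.1
      = ∑' p : T, (G.degree x : ℝ≥0∞)⁻¹ * wgt G (firstStep p).2.1 :=
        tsum_congr fun p => by rw [← wgt_cons (firstStep p).1.2, hcons]
    _ ≤ ∑' s : Σ y : G.neighborSet x, {q : G.Walk y u // q.support.count u = 1 ∧ q.length ≤ n},
          (G.degree x : ℝ≥0∞)⁻¹ * wgt G s.2.1 :=
        ENNReal.tsum_comp_le_tsum_of_injective hinj _
    _ = _ := by simp only [ENNReal.tsum_sigma', ENNReal.tsum_mul_left]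

lemma tsum_wgt_firstPassage_length_le_le_one (u : V) (n : ℕ) (x : V) :
    ∑' p : {p : G.Walk x u // p.support.count u = 1 ∧ p.length ≤ n}, wgt G p.1 ≤ 1 := by
  induction n generalizing x with
  | zero =>
    obtain rfl | hx := eq_or_ne x u
    · exact tsum_wgt_firstPassage_self_le_one x 0
    · have : IsEmpty {p : G.Walk x u // p.support.count u = 1 ∧ p.length ≤ 0} :=
        ⟨fun p => hx (Walk.eq_of_length_eq_zero (Nat.le_zero.mp p.2.2))⟩
      simp
  | succ n ih =>
    obtain rfl | hx := eq_or_ne x u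
    · exact tsum_wgt_firstPassage_self_le_one x (n + 1)
    calc _ ≤ _ := tsum_wgt_firstPassage_succ_le hx n
      _ ≤ (G.degree x : ℝ≥0∞)⁻¹ * ∑' _ : G.neighborSet x, 1 := by gcongr with y; exact ih y
      _ = (G.degree x : ℝ≥0∞)⁻¹ * G.degree x := by
        rw [tsum_fintype, Finset.sum_const, Finset.card_univ, card_neighborSet_eq_degree, nsmul_one]
      _ ≤ 1 := ENNReal.inv_mul_le_one _

lemma tsum_wgt_firstPassage_le_one (x u : V) :
    ∑' p : {p : G.Walk x u // p.support.count u = 1}, wgt G p.1 ≤ 1 :=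
  ENNReal.tsum_le_of_forall_tsum_sublevel_le (fun p => p.1.length) fun n =>
    ((Equiv.subtypeSubtypeEquivSubtypeInter _ _).tsum_eq fun p => wgt G p.1).trans_le
      (tsum_wgt_firstPassage_length_le_le_one u n x)

lemma tsum_wgt_mem_support_le (u : V) {v w : V} :
    ∑' p : {p : G.Walk v w // u ∈ p.support}, wgt G p.1 ≤
      (∑' p : {p : G.Walk v u // p.support.count u = 1}, wgt G p.1) *
        ∑' q : G.Walk u w, wgt G q := by
  let cut (p : {p : G.Walk v w // u ∈ p.support}) :
      {p : G.Walk v u // p.support.count u = 1} × G.Walk u w :=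
    (⟨p.1.takeUntil u p.2, p.1.count_support_takeUntil_eq_one p.2⟩, p.1.dropUntil u p.2)
  have happend (p : {p : G.Walk v w // u ∈ p.support}) : (cut p).1.1.append (cut p).2 = p.1 :=
    p.1.take_spec p.2
  have hinj : Function.Injective cut := fun p q hpq =>
    Subtype.ext <| by rw [← happend p, ← happend q, hpq]
  calc ∑' p : {p : G.Walk v w // u ∈ p.support}, wgt G p.1
      = ∑' p : {p : G.Walk v w // u ∈ p.support}, wgt G (cut p).1.1 * wgt G (cut p).2 :=
        tsum_congr fun p => by rw [← wgt_append, happend]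
    _ ≤ ∑' s : {p : G.Walk v u // p.support.count u = 1} × G.Walk u w, wgt G s.1.1 * wgt G s.2 :=
        ENNReal.tsum_comp_le_tsum_of_injective hinj _
    _ = _ := by simp only [ENNReal.tsum_prod', ENNReal.tsum_mul_left, ENNReal.tsum_mul_right]

end FirstPassage

theorem closed_walks_through_le_general (G : SimpleGraph V) [G.LocallyFinite]
    (v₀ u₀ : V) (hne : v₀ ≠ u₀) :
    ∑' ω : {ω : G.Walk v₀ v₀ // u₀ ∈ ω.support}, wgt G ω.1 ≤
      (G.degree v₀ : ℝ≥0∞) / (G.degree u₀ : ℝ≥0∞) * ∑' ω : G.Walk v₀ u₀, wgt G ω := by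
  classical
  calc ∑' ω : {ω : G.Walk v₀ v₀ // u₀ ∈ ω.support}, wgt G ω.1
      ≤ (∑' p : {p : G.Walk v₀ u₀ // p.support.count u₀ = 1}, wgt G p.1) *
          ∑' q : G.Walk u₀ v₀, wgt G q := tsum_wgt_mem_support_le u₀
    _ ≤ 1 * ∑' q : G.Walk u₀ v₀, wgt G q := by gcongr; exact tsum_wgt_firstPassage_le_one v₀ u₀
    _ = (G.degree v₀ : ℝ≥0∞) / (G.degree u₀ : ℝ≥0∞) * ∑' ω : G.Walk v₀ u₀, wgt G ω := by
        rw [one_mul, tsum_wgt_eq_degree_div_mul_tsum_wgt hne.symm]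

/-- For a connected locally finite graph `G` and distinct vertices `v₀ ≠ u₀`,
the weighted sum over closed walks from `v₀` that visit `u₀` is at most
`(σ_{v₀}/σ_{u₀})` times the weighted sum over all walks from `v₀` to `u₀`. -/
theorem closed_walks_through_le (G : SimpleGraph V) [G.LocallyFinite] (hG : G.Connected)
    (v₀ u₀ : V) (hne : v₀ ≠ u₀) :
    ∑' ω : {ω : G.Walk v₀ v₀ // u₀ ∈ ω.support}, wgt G ω.1 ≤
      (G.degree v₀ : ℝ≥0∞) / (G.degree u₀ : ℝ≥0∞) * ∑' ω : G.Walk v₀ u₀, wgt G ω :=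
  closed_walks_through_le_general G v₀ u₀ hne
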